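/- arXiv:2202.10317 — 2 statements merged into one kernel-verified Lean document; each statement's English description precedes it below -/
import Mathlib

section
/- Suppose φ : S → ℝ satisfies: there exist an integrable ψ : S → ℝ and real constants C₁, C₂, C₃, C₄ with C₂ = p·C₁ + q'·C₄ and C₃ = p'·C₁ + q·C₄, such that φ(x,1) = C₁ + ∫_x^0 ψ(y,1) dy for x < 0, φ(x,1) = C₂ − ∫_0^x ψ(y,1) dy for x > 0, φ(x,−1) = C₃ − ∫_x^0 ψ(y,−1) dy for x < 0, and φ(x,−1) = C₄ + ∫_0^x ψ(y,−1) dy for x > 0. Then the L¹-norm ‖(1/t)(T(t)φ − φ) − ψ‖_{L¹(S)} tends to 0 as t → 0+. -/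
open MeasureTheory Real Filter

/-- The action of `T(t)` on the upper-line component: `T(t)φ(x,1)`. -/
noncomputable def T1 (p q' t : ℝ) (φ1 φm : ℝ → ℝ) : ℝ → ℝ := fun x =>
  if x < 0 ∨ 0 < x - t then φ1 (x - t) else p * φ1 (x - t) + q' * φm (t - x)

/-- The action of `T(t)` on the lower-line component: `T(t)φ(x,-1)`. -/
noncomputable def Tm (q p' t : ℝ) (φ1 φm : ℝ → ℝ) : ℝ → ℝ := fun x =>
  if 0 < x ∨ x + t < 0 then φm (x + t) else q * φm (x + t) + p' * φ1 (-x - t)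

/-!
Away from the junction, `T(t)` translates by `t` (towards `+∞` on the upper line), so there
`t⁻¹ (T(t)φ - φ)` is the Steklov average `t⁻¹ ∫_{x-t}^x ψ = ∫_0^1 ψ(x - t u) du`; by Fubini its
`L¹` distance to `ψ` is at most `∫_0^1 ‖ψ(· - t u) - ψ‖₁ du`, which tends to `0` by continuity of
translation in `L¹`. On the strip `0 < x < t`, whose mass crosses the junction, the relations
`C₂ = p C₁ + q' C₄` and `C₃ = p' C₁ + q C₄` make the constants cancel, and what is left is `t⁻¹`
times integrals of `ψ` over subintervals of `[-t, t]`; integrated over the strip this is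
`O(∫_{-t}^t |ψ|) → 0`. The lower line is the upper one reflected by `x ↦ -x`.
-/

open Set
open scoped Topology

section SteklovAverage

variable {f : ℝ → ℝ}

theorem continuous_integral_abs_comp_sub_sub (hf : Integrable f) :
    Continuous fun s : ℝ => ∫ x, |f (x - s) - f x| := by
  have : Fact ((1 : ENNReal) ≤ 1) := ⟨le_rfl⟩
  let shift : ℝ → C(ℝ, ℝ) := fun s => ⟨fun x => x - s, by fun_prop⟩
  have hshift : ∀ s, MeasurePreserving (shift s) := fun s => measurePreserving_sub_right volume s
  let τ : ℝ → ℝ →₁[volume] ℝ := fun s =>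
    Lp.compMeasurePreserving (shift s) (hshift s) (hf.toL1 f)
  have hτ : Continuous τ :=
    continuous_const.compMeasurePreservingLp
      (ContinuousMap.continuous_of_continuous_uncurry _ (continuous_snd.sub continuous_fst))
      hshift ENNReal.one_ne_top
  have hτf : ∀ s, τ s =ᵐ[volume] fun x => f (x - s) := fun s => by
    filter_upwards [Lp.coeFn_compMeasurePreserving (hf.toL1 f) (hshift s),
      (hshift s).quasiMeasurePreserving.ae_eq_comp hf.coeFn_toL1] with x h1 h2
    exact h1.trans h2
  have hnorm : ∀ s, ∫ x, |f (x - s) - f x| = ‖τ s - τ 0‖ := fun s => by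
    rw [L1.norm_eq_integral_norm]
    refine integral_congr_ae ?_
    filter_upwards [Lp.coeFn_sub (τ s) (τ 0), hτf s, hτf 0] with x h h1 h2
    rw [h, Pi.sub_apply, h1, h2, sub_zero, Real.norm_eq_abs]
  simp_rw [hnorm]
  exact (hτ.sub continuous_const).norm

theorem integrable_comp_sub_mul_sub (hf : Integrable f) (t : ℝ) :
    Integrable (Function.uncurry fun x u => f (x - t * u) - f x)
      (volume.prod (volume.restrict (Icc 0 1))) := by
  have hshear : Measure.QuasiMeasurePreserving (fun z : ℝ × ℝ => z.1 - t * z.2)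
      (volume.prod (volume.restrict (Icc 0 1))) volume :=
    QuasiMeasurePreserving.prod_of_left (by fun_prop) <| ae_of_all _ fun u =>
      (measurePreserving_sub_right volume (t * u)).quasiMeasurePreserving
  have hmeas : AEStronglyMeasurable (Function.uncurry fun x u => f (x - t * u) - f x)
      (volume.prod (volume.restrict (Icc 0 1))) :=
    (hf.1.comp_quasiMeasurePreserving hshear).sub hf.1.comp_fst
  rw [integrable_prod_iff' hmeas]
  refine ⟨ae_of_all _ fun u => (hf.comp_sub_right (t * u)).sub hf, ?_⟩
  simp only [Function.uncurry, Real.norm_eq_abs]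
  exact ((continuous_integral_abs_comp_sub_sub hf).comp
    (continuous_const.mul continuous_id)).integrableOn_Icc

theorem inv_mul_intervalIntegral_sub_eq_setIntegral (hf : Integrable f) {t : ℝ} (ht : t ≠ 0)
    (x : ℝ) :
    t⁻¹ * (∫ y in x - t..x, f y) - f x = ∫ u in Icc 0 1, (f (x - t * u) - f x) := by
  have hcomp : Integrable fun u => f (x - t * u) :=
    (hf.comp_sub_left x).comp_mul_left' ht
  rw [integral_Icc_eq_integral_Ioc, ← intervalIntegral.integral_of_le zero_le_one,
    intervalIntegral.integral_sub hcomp.intervalIntegrable intervalIntegrable_const,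
    intervalIntegral.integral_comp_mul_left (fun s => f (x - s)) ht,
    intervalIntegral.integral_comp_sub_left]
  simp

theorem integrable_inv_mul_intervalIntegral_sub (hf : Integrable f) (t : ℝ) :
    Integrable fun x => t⁻¹ * (∫ y in x - t..x, f y) - f x := by
  rcases eq_or_ne t 0 with rfl | ht
  · simpa using hf.neg
  simp_rw [inv_mul_intervalIntegral_sub_eq_setIntegral hf ht]
  exact (integrable_comp_sub_mul_sub hf t).integral_prod_left

theorem integral_abs_inv_mul_intervalIntegral_sub_le (hf : Integrable f) {t : ℝ} (ht : t ≠ 0) :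
    ∫ x, |t⁻¹ * (∫ y in x - t..x, f y) - f x|
      ≤ ∫ u in Icc 0 1, ∫ x, |f (x - t * u) - f x| := by
  have hF := integrable_comp_sub_mul_sub hf t
  simp_rw [inv_mul_intervalIntegral_sub_eq_setIntegral hf ht, ← Real.norm_eq_abs]
  calc ∫ x, ‖∫ u in Icc 0 1, (f (x - t * u) - f x)‖
      ≤ ∫ x, ∫ u in Icc 0 1, ‖f (x - t * u) - f x‖ :=
        integral_mono hF.integral_prod_left.norm hF.norm.integral_prod_left
          fun x => norm_integral_le_integral_norm _
    _ = ∫ u in Icc 0 1, ∫ x, ‖f (x - t * u) - f x‖ := integral_integral_swap hF.norm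

theorem tendsto_integral_abs_inv_mul_intervalIntegral_sub (hf : Integrable f) :
    Tendsto (fun t => ∫ x, |t⁻¹ * (∫ y in x - t..x, f y) - f x|) (𝓝[≠] 0) (𝓝 0) := by
  have hbound : Continuous fun t => ∫ u in Icc (0 : ℝ) 1, ∫ x, |f (x - t * u) - f x| :=
    continuous_parametric_integral_of_continuous (f := fun t u => ∫ x, |f (x - t * u) - f x|)
      ((continuous_integral_abs_comp_sub_sub hf).comp (continuous_fst.mul continuous_snd))
      isCompact_Icc
  have hbound0 := (hbound.tendsto 0).mono_left (nhdsWithin_le_nhds (s := {0}ᶜ))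
  simp only [zero_mul, sub_zero, sub_self, abs_zero, integral_zero] at hbound0
  refine squeeze_zero' (.of_forall fun t => integral_nonneg fun _ => abs_nonneg _) ?_ hbound0
  filter_upwards [self_mem_nhdsWithin] with t ht
  exact integral_abs_inv_mul_intervalIntegral_sub_le hf ht

end SteklovAverage

section SymmetricInterval

variable {f : ℝ → ℝ}

theorem abs_intervalIntegral_le_intervalIntegral_neg_self_abs (hf : Integrable f) {a b t : ℝ}
    (ha : -t ≤ a) (hab : a ≤ b) (hb : b ≤ t) : |∫ y in a..b, f y| ≤ ∫ y in -t..t, |f y| :=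
  (intervalIntegral.abs_integral_le_integral_abs hab).trans <|
    intervalIntegral.integral_mono_interval ha hab hb (ae_of_all _ fun _ => abs_nonneg _)
      hf.abs.intervalIntegrable

theorem tendsto_intervalIntegral_neg_self_abs (hf : Integrable f) :
    Tendsto (fun t => ∫ y in -t..t, |f y|) (𝓝 0) (𝓝 0) := by
  have hF := intervalIntegral.continuous_primitive (fun _ _ => hf.abs.intervalIntegrable) 0
  have hsplit : ∀ t, ∫ y in -t..t, |f y| = (∫ y in 0..t, |f y|) - ∫ y in 0..-t, |f y| := fun t =>
    (intervalIntegral.integral_interval_sub_left hf.abs.intervalIntegrable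
      hf.abs.intervalIntegrable).symm
  simp_rw [hsplit]
  exact (hF.sub (hF.comp continuous_neg)).tendsto' 0 0 (by simp)

end SymmetricInterval

section UpperLine

variable {p q' C1 C2 C4 : ℝ} {φ1 φm ψ1 ψm : ℝ → ℝ}

theorem T1_sub_self_of_lt_zero_or_lt (hψ1 : Integrable ψ1)
    (hφ1n : ∀ x < (0:ℝ), φ1 x = C1 + ∫ y in x..(0:ℝ), ψ1 y)
    (hφ1p : ∀ x > (0:ℝ), φ1 x = C2 - ∫ y in (0:ℝ)..x, ψ1 y) {t x : ℝ} (ht : 0 ≤ t)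
    (hx : x < 0 ∨ t < x) :
    T1 p q' t φ1 φm x - φ1 x = ∫ y in x - t..x, ψ1 y := by
  rw [T1, if_pos (hx.imp_right fun h => by linarith)]
  rcases hx with hx | hx
  · rw [hφ1n x hx, hφ1n (x - t) (by linarith)]
    linear_combination -intervalIntegral.integral_add_adjacent_intervals
      (hψ1.intervalIntegrable (a := x - t) (b := x)) (hψ1.intervalIntegrable (a := x) (b := 0))
  · rw [hφ1p x (by linarith), hφ1p (x - t) (by linarith)]
    linear_combination intervalIntegral.integral_interval_sub_left
      (hψ1.intervalIntegrable (a := 0) (b := x)) (hψ1.intervalIntegrable (b := x - t))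

theorem T1_sub_self_of_mem_Ioo (hψ1 : Integrable ψ1) (hC2 : C2 = p * C1 + q' * C4)
    (hφ1n : ∀ x < (0:ℝ), φ1 x = C1 + ∫ y in x..(0:ℝ), ψ1 y)
    (hφ1p : ∀ x > (0:ℝ), φ1 x = C2 - ∫ y in (0:ℝ)..x, ψ1 y)
    (hφmp : ∀ x > (0:ℝ), φm x = C4 + ∫ y in (0:ℝ)..x, ψm y) {t x : ℝ} (hx : x ∈ Ioo 0 t) :
    T1 p q' t φ1 φm x - φ1 x = (∫ y in x - t..x, ψ1 y)
      + ((p - 1) * (∫ y in x - t..0, ψ1 y) + q' * ∫ y in 0..t - x, ψm y) := by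
  obtain ⟨hx0, hxt⟩ := hx
  rw [T1, if_neg (by push Not; constructor <;> linarith), hφ1n (x - t) (by linarith),
    hφmp (t - x) (by linarith), hφ1p x hx0, hC2]
  linear_combination intervalIntegral.integral_add_adjacent_intervals
    (hψ1.intervalIntegrable (a := x - t) (b := 0)) (hψ1.intervalIntegrable (a := 0) (b := x))

theorem integral_abs_T1_sub_self_sub_le (hψ1 : Integrable ψ1) (hψm : Integrable ψm)
    (hC2 : C2 = p * C1 + q' * C4)
    (hφ1n : ∀ x < (0:ℝ), φ1 x = C1 + ∫ y in x..(0:ℝ), ψ1 y)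
    (hφ1p : ∀ x > (0:ℝ), φ1 x = C2 - ∫ y in (0:ℝ)..x, ψ1 y)
    (hφmp : ∀ x > (0:ℝ), φm x = C4 + ∫ y in (0:ℝ)..x, ψm y) {t : ℝ} (ht : 0 < t) :
    ∫ x, |t⁻¹ * (T1 p q' t φ1 φm x - φ1 x) - ψ1 x|
      ≤ (∫ x, |t⁻¹ * (∫ y in x - t..x, ψ1 y) - ψ1 x|)
        + (|p - 1| * (∫ y in -t..t, |ψ1 y|) + |q'| * ∫ y in -t..t, |ψm y|) := by
  set K := |p - 1| * (∫ y in -t..t, |ψ1 y|) + |q'| * ∫ y in -t..t, |ψm y|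
  -- at `x = 0` and `x = t`, `T1` reads `φ1` or `φm` at `0`, where nothing is known about them
  have hsing : ∀ᵐ x : ℝ, x ≠ 0 ∧ x ≠ t := by
    filter_upwards [compl_mem_ae_iff.2 ((toFinite {0, t}).measure_zero volume)] with x hx
    simpa [not_or] using hx
  have hpt : ∀ᵐ x : ℝ, |t⁻¹ * (T1 p q' t φ1 φm x - φ1 x) - ψ1 x|
      ≤ |t⁻¹ * (∫ y in x - t..x, ψ1 y) - ψ1 x| + (Ioo 0 t).indicator (fun _ => t⁻¹ * K) x := by
    filter_upwards [hsing] with x ⟨hx0, hxt⟩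
    by_cases hx : x ∈ Ioo 0 t
    · rw [indicator_of_mem hx, T1_sub_self_of_mem_Ioo hψ1 hC2 hφ1n hφ1p hφmp hx, mul_add,
        add_sub_right_comm]
      refine (abs_add_le _ _).trans (add_le_add le_rfl ?_)
      rw [abs_mul, abs_of_pos (inv_pos.2 ht)]
      gcongr
      obtain ⟨hx0, hxt⟩ := hx
      calc _ ≤ |p - 1| * |∫ y in x - t..0, ψ1 y| + |q'| * |∫ y in 0..t - x, ψm y| := by
            rw [← abs_mul, ← abs_mul]
            exact abs_add_le _ _
        _ ≤ K := add_le_add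
            (mul_le_mul_of_nonneg_left (abs_intervalIntegral_le_intervalIntegral_neg_self_abs hψ1
              (by linarith) (by linarith) (by linarith)) (abs_nonneg _))
            (mul_le_mul_of_nonneg_left (abs_intervalIntegral_le_intervalIntegral_neg_self_abs hψm
              (by linarith) (by linarith) (by linarith)) (abs_nonneg _))
    · have hx' : x < 0 ∨ t < x := by
        simp only [mem_Ioo, not_and_or, not_lt] at hx
        exact hx.imp (lt_of_le_of_ne · hx0) (lt_of_le_of_ne · hxt.symm)
      rw [indicator_of_notMem hx, add_zero, T1_sub_self_of_lt_zero_or_lt hψ1 hφ1n hφ1p ht.le hx']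
  have hA := (integrable_inv_mul_intervalIntegral_sub hψ1 t).abs
  have hK : Integrable ((Ioo 0 t).indicator fun _ => t⁻¹ * K) :=
    (integrableOn_const measure_Ioo_lt_top.ne).integrable_indicator measurableSet_Ioo
  calc _ ≤ ∫ x, (|t⁻¹ * (∫ y in x - t..x, ψ1 y) - ψ1 x|
          + (Ioo 0 t).indicator (fun _ => t⁻¹ * K) x) :=
        integral_mono_of_nonneg (ae_of_all _ fun _ => abs_nonneg _) (hA.add hK) hpt
    _ = _ := by
        rw [integral_add hA hK, integral_indicator_const _ measurableSet_Ioo,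
          Real.volume_real_Ioo_of_le ht.le, smul_eq_mul, sub_zero, mul_inv_cancel_left₀ ht.ne']

theorem tendsto_integral_abs_T1_sub_self_sub (hψ1 : Integrable ψ1) (hψm : Integrable ψm)
    (hC2 : C2 = p * C1 + q' * C4)
    (hφ1n : ∀ x < (0:ℝ), φ1 x = C1 + ∫ y in x..(0:ℝ), ψ1 y)
    (hφ1p : ∀ x > (0:ℝ), φ1 x = C2 - ∫ y in (0:ℝ)..x, ψ1 y)
    (hφmp : ∀ x > (0:ℝ), φm x = C4 + ∫ y in (0:ℝ)..x, ψm y) :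
    Tendsto (fun t => ∫ x, |t⁻¹ * (T1 p q' t φ1 φm x - φ1 x) - ψ1 x|) (𝓝[>] 0) (𝓝 0) := by
  have hsteklov := (tendsto_integral_abs_inv_mul_intervalIntegral_sub hψ1).mono_left
    (nhdsGT_le_nhdsNE 0)
  have hjunction := (((tendsto_intervalIntegral_neg_self_abs hψ1).const_mul |p - 1|).add
    ((tendsto_intervalIntegral_neg_self_abs hψm).const_mul |q'|)).mono_left
    (nhdsWithin_le_nhds (s := Ioi 0))
  have hbound := hsteklov.add hjunction
  simp only [mul_zero, add_zero] at hbound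
  refine squeeze_zero' (.of_forall fun t => integral_nonneg fun _ => abs_nonneg _) ?_ hbound
  filter_upwards [self_mem_nhdsWithin] with t ht
  exact integral_abs_T1_sub_self_sub_le hψ1 hψm hC2 hφ1n hφ1p hφmp ht

end UpperLine

theorem Tm_eq_T1_neg (q p' t : ℝ) (φ1 φm : ℝ → ℝ) (x : ℝ) :
    Tm q p' t φ1 φm x = T1 q p' t (fun y => φm (-y)) (fun y => φ1 (-y)) (-x) := by
  have hcond : (0 < x ∨ x + t < 0) ↔ (-x < 0 ∨ 0 < -x - t) := by
    rw [neg_lt_zero, sub_pos, lt_neg_iff_add_neg']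
  rw [Tm, T1, if_congr hcond rfl rfl, show -(-x - t) = x + t by ring,
    show -(t - -x) = -x - t by ring]

theorem tendsto_integral_abs_Tm_sub_self_sub {p' q C1 C3 C4 : ℝ} {φ1 φm ψ1 ψm : ℝ → ℝ}
    (hψ1 : Integrable ψ1) (hψm : Integrable ψm) (hC3 : C3 = p' * C1 + q * C4)
    (hφ1n : ∀ x < (0:ℝ), φ1 x = C1 + ∫ y in x..(0:ℝ), ψ1 y)
    (hφmn : ∀ x < (0:ℝ), φm x = C3 - ∫ y in x..(0:ℝ), ψm y)
    (hφmp : ∀ x > (0:ℝ), φm x = C4 + ∫ y in (0:ℝ)..x, ψm y) :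
    Tendsto (fun t => ∫ x, |t⁻¹ * (Tm q p' t φ1 φm x - φm x) - ψm x|) (𝓝[>] 0) (𝓝 0) := by
  have hreflected := tendsto_integral_abs_T1_sub_self_sub (p := q) (q' := p')
    (C1 := C4) (C2 := C3) (C4 := C1) (φ1 := fun y => φm (-y)) (φm := fun y => φ1 (-y))
    (ψ1 := fun y => ψm (-y)) (ψm := fun y => ψ1 (-y)) hψm.comp_neg hψ1.comp_neg
    (by rw [hC3]; ring)
    (fun x hx => by
      rw [hφmp (-x) (neg_pos.2 hx), intervalIntegral.integral_comp_neg, neg_zero])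
    (fun x hx => by
      rw [hφmn (-x) (neg_lt_zero.2 hx), intervalIntegral.integral_comp_neg, neg_zero])
    (fun x hx => by
      rw [hφ1n (-x) (neg_lt_zero.2 hx), intervalIntegral.integral_comp_neg, neg_zero])
  refine hreflected.congr fun t => ?_
  rw [← integral_neg_eq_self (fun x => |t⁻¹ * (Tm q p' t φ1 φm x - φm x) - ψm x|)]
  simp only [Tm_eq_T1_neg, neg_neg]

theorem stmt3_general (p p' q q' : ℝ)
    (φ1 φm ψ1 ψm : ℝ → ℝ)
    (hψ1 : Integrable ψ1) (hψm : Integrable ψm)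
    (C1 C2 C3 C4 : ℝ) (hC2 : C2 = p * C1 + q' * C4) (hC3 : C3 = p' * C1 + q * C4)
    (hφ1n : ∀ x < (0:ℝ), φ1 x = C1 + ∫ y in x..(0:ℝ), ψ1 y)
    (hφ1p : ∀ x > (0:ℝ), φ1 x = C2 - ∫ y in (0:ℝ)..x, ψ1 y)
    (hφmn : ∀ x < (0:ℝ), φm x = C3 - ∫ y in x..(0:ℝ), ψm y)
    (hφmp : ∀ x > (0:ℝ), φm x = C4 + ∫ y in (0:ℝ)..x, ψm y) :
    Tendsto (fun t : ℝ =>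
        (∫ x, |(1/t) * (T1 p q' t φ1 φm x - φ1 x) - ψ1 x|)
          + ∫ x, |(1/t) * (Tm q p' t φ1 φm x - φm x) - ψm x|)
      (nhdsWithin 0 (Set.Ioi 0)) (nhds 0) := by
  simp_rw [one_div]
  simpa using (tendsto_integral_abs_T1_sub_self_sub hψ1 hψm hC2 hφ1n hφ1p hφmp).add
    (tendsto_integral_abs_Tm_sub_self_sub hψ1 hψm hC3 hφ1n hφmn hφmp)

theorem stmt3 (p p' q q' : ℝ) (hp : 0 ≤ p) (hp' : 0 ≤ p') (hq : 0 ≤ q) (hq' : 0 ≤ q')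
    (hpp : p + p' ≤ 1) (hqq : q + q' ≤ 1)
    (φ1 φm ψ1 ψm : ℝ → ℝ) (hφ1 : Integrable φ1) (hφm : Integrable φm)
    (hψ1 : Integrable ψ1) (hψm : Integrable ψm)
    (C1 C2 C3 C4 : ℝ) (hC2 : C2 = p * C1 + q' * C4) (hC3 : C3 = p' * C1 + q * C4)
    (hφ1n : ∀ x < (0:ℝ), φ1 x = C1 + ∫ y in x..(0:ℝ), ψ1 y)
    (hφ1p : ∀ x > (0:ℝ), φ1 x = C2 - ∫ y in (0:ℝ)..x, ψ1 y)
    (hφmn : ∀ x < (0:ℝ), φm x = C3 - ∫ y in x..(0:ℝ), ψm y)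
    (hφmp : ∀ x > (0:ℝ), φm x = C4 + ∫ y in (0:ℝ)..x, ψm y) :
    Tendsto (fun t : ℝ =>
        (∫ x, |(1/t) * (T1 p q' t φ1 φm x - φ1 x) - ψ1 x|)
          + ∫ x, |(1/t) * (Tm q p' t φ1 φm x - φm x) - ψm x|)
      (nhdsWithin 0 (Set.Ioi 0)) (nhds 0) :=
  stmt3_general p p' q q' φ1 φm ψ1 ψm hψ1 hψm C1 C2 C3 C4 hC2 hC3 hφ1n hφ1p hφmn hφmp
end

section
/- For every t > 0, every x < 0, and every bounded continuous f : ℝ → ℝ: √(2/(π t)) ∫_0^∞ e^{−s²/(2t)} C*(s)f(x) ds = ∫_{−∞}^∞ γ⁻(t,x,y) f(y) dy, where γ⁻(t,x,y) = (1/√(2πt))·(e^{−(y−x)²/(2t)} + ((q−p)/(p+q))·e^{−(y+x)²/(2t)}) for y < 0 and γ⁻(t,x,y) = (1/√(2πt))·(2p/(p+q))·e^{−(y−x)²/(2t)} for y > 0. -/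
/-! For `x < 0` and `s > 0`, `C*(s)f(x)` is the average of `f(x ± s)`, corrected by
`(q - p)/(2(p + q)) · (f(-x - s) - f(x + s))` exactly when `s > -x`. Against the weight
`exp(-s²/(2t))` the substitutions `y = x ± s` and `y = -x - s` turn every term into an integral of
`exp(-(y ∓ x)²/(2t)) f(y)` over a half-line: the averaged part gives the free Gaussian kernel on all
of `ℝ`, while the correction adds the reflected kernel on `y < 0` and removes the fraction
`(q - p)/(p + q)` of the free kernel on `y > 0`, leaving `1 - (q - p)/(p + q) = 2p/(p + q)` there.
-/

open MeasureTheory Real Filter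

/-- The dual cosine family `C*(t)` (extended to all real `t` by `C*(t) = C*(-t)`). -/
noncomputable def Cstar (p q t : ℝ) (f : ℝ → ℝ) : ℝ → ℝ := fun x =>
  if |t| ≤ |x| then (f (x + |t|) + f (x - |t|)) / 2
  else if x ≤ 0 then
    (f (x + |t|) + f (x - |t|)) / 2 + (q - p) / (2 * (p + q)) * (f (-x - |t|) - f (x + |t|))
  else
    (f (x + |t|) + f (x - |t|)) / 2 + (p - q) / (2 * (p + q)) * (f (|t| - x) - f (x - |t|))

/-- Transition density `γ⁺(t,x,y)` for a starting point `x > 0`. -/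
noncomputable def gammaPlus (p q t x y : ℝ) : ℝ :=
  if 0 < y then
    (1 / Real.sqrt (2 * Real.pi * t)) *
      (Real.exp (-(y - x)^2 / (2 * t)) + ((p - q) / (p + q)) * Real.exp (-(y + x)^2 / (2 * t)))
  else
    (1 / Real.sqrt (2 * Real.pi * t)) * (2 * q / (p + q)) * Real.exp (-(y - x)^2 / (2 * t))

/-- Transition density `γ⁻(t,x,y)` for a starting point `x < 0`. -/
noncomputable def gammaMinus (p q t x y : ℝ) : ℝ :=
  if y < 0 then
    (1 / Real.sqrt (2 * Real.pi * t)) *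
      (Real.exp (-(y - x)^2 / (2 * t)) + ((q - p) / (p + q)) * Real.exp (-(y + x)^2 / (2 * t)))
  else
    (1 / Real.sqrt (2 * Real.pi * t)) * (2 * p / (p + q)) * Real.exp (-(y - x)^2 / (2 * t))

open Set

noncomputable def gaussianMul (t c : ℝ) (f : ℝ → ℝ) : ℝ → ℝ := fun y =>
  exp (-(y - c) ^ 2 / (2 * t)) * f y

lemma integrable_exp_neg_sq_div_mul {t : ℝ} (ht : 0 < t) {f : ℝ → ℝ}
    (hf : AEStronglyMeasurable f) {M : ℝ} (hM : ∀ y, |f y| ≤ M) :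
    Integrable fun s => exp (-s ^ 2 / (2 * t)) * f s := by
  have hg : Integrable fun s : ℝ => exp (-s ^ 2 / (2 * t)) := by
    convert integrable_exp_neg_mul_sq (one_div_pos.mpr (mul_pos two_pos ht)) using 3
    ring
  exact hg.mul_bdd hf (.of_forall hM)

lemma integrable_gaussianMul {t : ℝ} (ht : 0 < t) {f : ℝ → ℝ} (hf : Measurable f) {M : ℝ}
    (hM : ∀ y, |f y| ≤ M) (c : ℝ) : Integrable (gaussianMul t c f) := by
  have h := (integrable_exp_neg_sq_div_mul ht
    (hf.comp (measurable_add_const c)).aestronglyMeasurable fun y => hM (y + c)).comp_sub_right c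
  unfold gaussianMul
  simpa only [Function.comp_apply, sub_add_cancel] using h

lemma integral_comp_add_right_Ioi {E : Type*} [NormedAddCommGroup E] [NormedSpace ℝ E]
    (F : ℝ → E) (a c : ℝ) : ∫ s in Ioi a, F (s + c) = ∫ y in Ioi (a + c), F y := by
  rw [← (measurePreserving_add_right volume c).setIntegral_preimage_emb
    (Homeomorph.addRight c).isClosedEmbedding.measurableEmbedding F (Ioi (a + c)),
    preimage_add_const_Ioi, add_sub_cancel_right]

lemma integral_comp_sub_left_Ioi {E : Type*} [NormedAddCommGroup E] [NormedSpace ℝ E]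
    (F : ℝ → E) (a c : ℝ) : ∫ s in Ioi a, F (c - s) = ∫ y in Iic (c - a), F y := by
  rw [← neg_sub a c, ← integral_comp_neg_Ioi, sub_eq_add_neg a c,
    ← integral_comp_add_right_Ioi (fun u => F (-u))]
  simp only [← sub_eq_add_neg, neg_sub]

lemma integral_Ioi_exp_mul_comp_add (t c a : ℝ) (f : ℝ → ℝ) :
    ∫ s in Ioi a, exp (-s ^ 2 / (2 * t)) * f (c + s) = ∫ y in Ioi (a + c), gaussianMul t c f y := by
  rw [← integral_comp_add_right_Ioi]
  simp only [gaussianMul, add_sub_cancel_right, add_comm c]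

lemma integral_Ioi_exp_mul_comp_sub (t c a : ℝ) (f : ℝ → ℝ) :
    ∫ s in Ioi a, exp (-s ^ 2 / (2 * t)) * f (c - s) = ∫ y in Iic (c - a), gaussianMul t c f y := by
  rw [← integral_comp_sub_left_Ioi]
  simp only [gaussianMul, sub_sub_cancel_left, neg_sq]

lemma Cstar_of_neg_of_pos (p q : ℝ) (f : ℝ → ℝ) {x s : ℝ} (hx : x < 0) (hs : 0 < s) :
    Cstar p q s f x = (f (x + s) + f (x - s)) / 2 +
      (Ioi (-x)).indicator (fun s => (q - p) / (2 * (p + q)) * (f (-x - s) - f (x + s))) s := by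
  simp only [Cstar, abs_of_pos hs, abs_of_neg hx, indicator_apply, mem_Ioi]
  by_cases h : s ≤ -x
  · simp [h, not_lt.mpr h]
  · simp [h, lt_of_not_ge h, hx.le]

lemma integral_Ioi_exp_mul_Cstar_of_neg {t : ℝ} (ht : 0 < t) (p q : ℝ) {x : ℝ} (hx : x < 0)
    {f : ℝ → ℝ} (hf : Measurable f) {M : ℝ} (hM : ∀ y, |f y| ≤ M) :
    ∫ s in Ioi 0, exp (-s ^ 2 / (2 * t)) * Cstar p q s f x
      = (∫ y, gaussianMul t x f y) / 2 + (q - p) / (2 * (p + q)) *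
        ((∫ y in Iio 0, gaussianMul t (-x) f y) - ∫ y in Ioi 0, gaussianMul t x f y) := by
  set c₀ := (q - p) / (2 * (p + q))
  have hint (φ : ℝ → ℝ) (hφ : Measurable φ) :
      Integrable fun s => exp (-s ^ 2 / (2 * t)) * f (φ s) :=
    integrable_exp_neg_sq_div_mul ht (hf.comp hφ).aestronglyMeasurable fun s => hM (φ s)
  have hG := integrable_gaussianMul ht hf hM x
  have h₁ := hint (x + ·) (by fun_prop)
  have h₂ := hint (x - ·) (by fun_prop)
  have h₃ := hint (-x - ·) (by fun_prop)
  have hsplit : EqOn (fun s => exp (-s ^ 2 / (2 * t)) * Cstar p q s f x)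
      (fun s => exp (-s ^ 2 / (2 * t)) * f (x + s) / 2 + exp (-s ^ 2 / (2 * t)) * f (x - s) / 2
        + (Ioi (-x)).indicator (fun s => c₀ * (exp (-s ^ 2 / (2 * t)) * f (-x - s)
            - exp (-s ^ 2 / (2 * t)) * f (x + s))) s) (Ioi 0) := by
    intro s hs
    simp only [Cstar_of_neg_of_pos p q f hx hs, indicator_apply]
    split_ifs <;> ring
  rw [setIntegral_congr_fun measurableSet_Ioi hsplit,
    integral_add (by exact ((h₁.div_const 2).add (h₂.div_const 2)).integrableOn)
      (by exact (((h₃.sub h₁).const_mul c₀).indicator measurableSet_Ioi).integrableOn),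
    integral_add (h₁.div_const 2).integrableOn (h₂.div_const 2).integrableOn,
    integral_div, integral_div, setIntegral_indicator measurableSet_Ioi,
    Ioi_inter_Ioi, sup_eq_right.mpr (neg_pos.mpr hx).le, integral_const_mul,
    integral_sub h₃.integrableOn h₁.integrableOn]
  rw [integral_Ioi_exp_mul_comp_add, integral_Ioi_exp_mul_comp_sub,
    integral_Ioi_exp_mul_comp_sub, integral_Ioi_exp_mul_comp_add, zero_add, sub_zero,
    sub_neg_eq_add, neg_add_cancel, integral_Iic_eq_integral_Iio (f := gaussianMul t (-x) f),
    ← add_div, add_comm (∫ y in Ioi x, _),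
    intervalIntegral.integral_Iic_add_Ioi hG.integrableOn hG.integrableOn]

lemma integral_gammaMinus_mul {t : ℝ} (ht : 0 < t) (p q x : ℝ) {f : ℝ → ℝ} (hf : Measurable f)
    {M : ℝ} (hM : ∀ y, |f y| ≤ M) :
    ∫ y, gammaMinus p q t x y * f y = 1 / √(2 * π * t) *
      ((∫ y in Iio 0, gaussianMul t x f y)
        + (q - p) / (p + q) * (∫ y in Iio 0, gaussianMul t (-x) f y)
        + 2 * p / (p + q) * ∫ y in Ioi 0, gaussianMul t x f y) := by
  set k := 1 / √(2 * π * t)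
  have hG₁ := integrable_gaussianMul ht hf hM x
  have hG₂ := integrable_gaussianMul ht hf hM (-x)
  have hneg : EqOn (fun y => gammaMinus p q t x y * f y)
      (fun y => k * gaussianMul t x f y + k * ((q - p) / (p + q)) * gaussianMul t (-x) f y)
      (Iio 0) := by
    intro y hy
    simp only [gammaMinus, if_pos (show y < 0 from hy), gaussianMul, sub_neg_eq_add]
    ring
  have hnonneg : EqOn (fun y => gammaMinus p q t x y * f y)
      (fun y => k * (2 * p / (p + q)) * gaussianMul t x f y) (Ici 0) := by
    intro y hy
    simp only [gammaMinus, if_neg (not_lt.mpr (show 0 ≤ y from hy)), gaussianMul]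
    ring
  have hI₁ := hG₁.const_mul k
  have hI₂ := hG₂.const_mul (k * ((q - p) / (p + q)))
  rw [← intervalIntegral.integral_Iio_add_Ici
      ((hI₁.add hI₂).integrableOn.congr_fun hneg.symm measurableSet_Iio)
      ((hG₁.const_mul _).integrableOn.congr_fun hnonneg.symm measurableSet_Ici),
    setIntegral_congr_fun measurableSet_Iio hneg, setIntegral_congr_fun measurableSet_Ici hnonneg,
    integral_add hI₁.integrableOn hI₂.integrableOn, integral_const_mul, integral_const_mul,
    integral_const_mul, integral_Ici_eq_integral_Ioi]
  ring

lemma sqrt_two_div_pi_mul (t : ℝ) : √(2 / (π * t)) = 2 / √(2 * π * t) := by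
  rw [show 2 / (π * t) = 4 / (2 * π * t) by ring, sqrt_div zero_le_four,
    show (4 : ℝ) = 2 ^ 2 by norm_num, sqrt_sq zero_le_two]

theorem stmt16_general (p q : ℝ) (hpq : 0 < p + q)
    (t x : ℝ) (ht : 0 < t) (hx : x < 0)
    (f : ℝ → ℝ) (hf : Continuous f) (hb : ∃ M, ∀ y, |f y| ≤ M) :
    Real.sqrt (2 / (Real.pi * t)) *
        ∫ s in Set.Ioi (0:ℝ), Real.exp (-s^2 / (2 * t)) * Cstar p q s f x
      = ∫ y : ℝ, gammaMinus p q t x y * f y := by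
  obtain ⟨M, hM⟩ := hb
  have hG := integrable_gaussianMul ht hf.measurable hM x
  rw [integral_Ioi_exp_mul_Cstar_of_neg ht p q hx hf.measurable hM,
    integral_gammaMinus_mul ht p q x hf.measurable hM, sqrt_two_div_pi_mul,
    ← intervalIntegral.integral_Iio_add_Ici (b := 0) hG.integrableOn hG.integrableOn,
    integral_Ici_eq_integral_Ioi]
  field_simp
  ring

theorem stmt16 (p q : ℝ) (hp : 0 ≤ p) (hq : 0 ≤ q) (hpq : 0 < p + q)
    (t x : ℝ) (ht : 0 < t) (hx : x < 0)
    (f : ℝ → ℝ) (hf : Continuous f) (hb : ∃ M, ∀ y, |f y| ≤ M) :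
    Real.sqrt (2 / (Real.pi * t)) *
        ∫ s in Set.Ioi (0:ℝ), Real.exp (-s^2 / (2 * t)) * Cstar p q s f x
      = ∫ y : ℝ, gammaMinus p q t x y * f y :=
  stmt16_general p q hpq t x ht hx f hf hb
end
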